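/- arXiv:2408.13260 — 3 statements merged into one kernel-verified Lean document; each statement's English description precedes it below -/
import Mathlib

section
/- For every fuzzy graph G, the strong domination number is at most the strong-neighbors Roman domination number, which is at most twice the strong domination number: γ_s(G) ≤ γ_snR(G) ≤ 2γ_s(G). -/
noncomputable section
open scoped Classical
open Finset

/-- A fuzzy graph on a vertex set `V`. -/
structure FuzzyGraph (V : Type*) where
  σ : V → ℝ
  μ : V → V → ℝ
  σ_nonneg : ∀ v, 0 ≤ σ v
  σ_le_one : ∀ v, σ v ≤ 1
  μ_nonneg : ∀ u v, 0 ≤ μ u v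
  μ_symm : ∀ u v, μ u v = μ v u
  μ_le : ∀ u v, μ u v ≤ min (σ u) (σ v)
  μ_irrefl : ∀ v, μ v v = 0

namespace FuzzyGraph

variable {V : Type*} (G : FuzzyGraph V)

/-- The strength of a walk (given as its list of vertices): the minimum
membership value of its edges (1 for walks without edges). -/
def walkStrength (l : List V) : ℝ :=
  ((l.zip l.tail).map fun p => G.μ p.1 p.2).foldr min 1

/-- `l` is a `u`–`v` walk: it starts at `u`, ends at `v`, and consecutive
vertices are joined by edges of positive membership. -/
def IsWalk (u v : V) (l : List V) : Prop :=
  l.head? = some u ∧ l.getLast? = some v ∧ l.Chain' (fun a b => 0 < G.μ a b)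

/-- `CONN_G(u,v)`: the maximum strength over all `u`–`v` paths. -/
def conn (u v : V) : ℝ :=
  sSup {s | ∃ l : List V, G.IsWalk u v l ∧ 2 ≤ l.length ∧ s = G.walkStrength l}

/-- The edge `(u,v)` is strong. -/
def StrongEdge (u v : V) : Prop :=
  0 < G.μ u v ∧ G.μ u v = G.conn u v

/-- `μ_s(u)`: the minimum membership value among strong edges at `u`
(`0` if `u` has no strong neighbor, via `Real.sInf_empty`). -/
def mus (u : V) : ℝ :=
  sInf {x | ∃ v, G.StrongEdge u v ∧ x = G.μ u v}

/-- The strong neighborhood degree `d_SN(v)`. -/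
def dSN [Fintype V] (v : V) : ℝ :=
  ∑ u ∈ Finset.univ.filter (fun u => G.StrongEdge v u), G.σ u

/-- `D` is a strong dominating set. -/
def IsStrongDomSet (D : Finset V) : Prop :=
  ∀ v, v ∉ D → ∃ u ∈ D, G.StrongEdge v u

/-- The weight of a strong dominating set. -/
def domWeight (D : Finset V) : ℝ := ∑ u ∈ D, G.mus u

/-- The strong domination number `γ_s(G)`. -/
def gammaS [Fintype V] : ℝ :=
  sInf {w | ∃ D : Finset V, G.IsStrongDomSet D ∧ w = G.domWeight D}

/-- `f` is a strong-neighbors Roman dominating function (SNRDF). -/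
def IsSNRDF (f : V → ℕ) : Prop :=
  (∀ v, f v ≤ 2) ∧ ∀ v, f v = 0 → ∃ u, G.StrongEdge v u ∧ f u = 2

/-- The weight of an SNRDF. -/
def snrdfWeight [Fintype V] (f : V → ℕ) : ℝ := ∑ v, (f v : ℝ) * G.mus v

/-- The strong-neighbors Roman domination number `γ_snR(G)`. -/
def gammaSnR [Fintype V] : ℝ :=
  sInf {w | ∃ f : V → ℕ, G.IsSNRDF f ∧ w = G.snrdfWeight f}

/-- The fuzzy subgraph induced by the vertices satisfying `p`. -/
def induce (p : V → Prop) : FuzzyGraph {v // p v} where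
  σ v := G.σ v
  μ u v := G.μ u v
  σ_nonneg v := G.σ_nonneg v
  σ_le_one v := G.σ_le_one v
  μ_nonneg u v := G.μ_nonneg u v
  μ_symm u v := G.μ_symm u v
  μ_le u v := G.μ_le u v
  μ_irrefl v := G.μ_irrefl v

/-- The minimum membership value among the strong edges of `G`. -/
def muMin : ℝ := sInf {x | ∃ u v, G.StrongEdge u v ∧ x = G.μ u v}

/-- The complement of a fuzzy graph. -/
def compl : FuzzyGraph V where
  σ := G.σ
  μ u v := if u = v then 0 else min (G.σ u) (G.σ v) - G.μ u v
  σ_nonneg := G.σ_nonneg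
  σ_le_one := G.σ_le_one
  μ_nonneg u v := by
    by_cases h : u = v
    · simp [h]
    · simp only [if_neg h, sub_nonneg]
      exact G.μ_le u v
  μ_symm u v := by
    by_cases h : u = v
    · simp [h]
    · have h' : ¬ v = u := fun hh => h hh.symm
      simp only [if_neg h, if_neg h', min_comm (G.σ u), G.μ_symm u v]
  μ_le u v := by
    by_cases h : u = v
    · subst h
      simp only [if_pos rfl, le_min_iff]
      exact ⟨G.σ_nonneg u, G.σ_nonneg u⟩
    · simp only [if_neg h]
      have := G.μ_nonneg u v
      linarith
  μ_irrefl v := by simp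

end FuzzyGraph

/-- γ_s(G) ≤ γ_snR(G) ≤ 2·γ_s(G). -/
theorem gammaS_le_gammaSnR_le_two_mul_gammaS {V : Type*} [Fintype V]
    (G : FuzzyGraph V) :
    G.gammaS ≤ G.gammaSnR ∧ G.gammaSnR ≤ 2 * G.gammaS := by
  have mus_nonneg : ∀ u, 0 ≤ G.mus u := by
    intro u
    apply Real.sInf_nonneg
    rintro x ⟨v, hv, rfl⟩
    exact G.μ_nonneg u v
  have domW_nonneg : ∀ D : Finset V, 0 ≤ G.domWeight D := fun D =>
    Finset.sum_nonneg fun u _ => mus_nonneg u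
  have snrW_nonneg : ∀ f : V → ℕ, 0 ≤ G.snrdfWeight f := fun f =>
    Finset.sum_nonneg fun u _ => mul_nonneg (by positivity) (mus_nonneg u)
  set S : Set ℝ := {w | ∃ D : Finset V, G.IsStrongDomSet D ∧ w = G.domWeight D} with hS
  set T : Set ℝ := {w | ∃ f : V → ℕ, G.IsSNRDF f ∧ w = G.snrdfWeight f} with hT
  have hSne : S.Nonempty := ⟨G.domWeight Finset.univ, Finset.univ,
    fun v hv => absurd (Finset.mem_univ v) hv, rfl⟩
  have hTne : T.Nonempty := ⟨G.snrdfWeight (fun _ => 1), (fun _ => 1),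
    ⟨fun _ => by norm_num, fun v hv => by simp at hv⟩, rfl⟩
  have hSbdd : BddBelow S := ⟨0, by rintro w ⟨D, _, rfl⟩; exact domW_nonneg D⟩
  have hTbdd : BddBelow T := ⟨0, by rintro w ⟨f, _, rfl⟩; exact snrW_nonneg f⟩
  constructor
  · -- γ_s ≤ γ_snR
    apply le_csInf hTne
    rintro w ⟨f, ⟨hle, hdom⟩, rfl⟩
    set D : Finset V := Finset.univ.filter (fun v => f v ≠ 0) with hD
    have hDdom : G.IsStrongDomSet D := by
      intro v hv
      have hv0 : f v = 0 := by
        by_contra h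
        exact hv (Finset.mem_filter.mpr ⟨Finset.mem_univ v, h⟩)
      obtain ⟨u, hu, hu2⟩ := hdom v hv0
      exact ⟨u, Finset.mem_filter.mpr ⟨Finset.mem_univ u, by omega⟩, hu⟩
    have hle' : G.domWeight D ≤ G.snrdfWeight f := by
      unfold FuzzyGraph.domWeight FuzzyGraph.snrdfWeight
      rw [← Finset.sum_filter_add_sum_filter_not Finset.univ (fun v => f v ≠ 0)
        (fun v => (f v : ℝ) * G.mus v)]
      have h1 : ∑ u ∈ D, G.mus u ≤ ∑ v ∈ Finset.univ.filter (fun v => f v ≠ 0),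
          (f v : ℝ) * G.mus v := by
        apply Finset.sum_le_sum
        intro i hi
        have : f i ≠ 0 := (Finset.mem_filter.mp hi).2
        have : (1 : ℝ) ≤ (f i : ℝ) := by exact_mod_cast Nat.one_le_iff_ne_zero.mpr this
        nlinarith [mus_nonneg i]
      have h2 : (0:ℝ) ≤ ∑ v ∈ Finset.univ.filter (fun v => ¬ f v ≠ 0),
          (f v : ℝ) * G.mus v :=
        Finset.sum_nonneg fun v _ => mul_nonneg (by positivity) (mus_nonneg v)
      linarith
    exact le_trans (csInf_le hSbdd ⟨D, hDdom, rfl⟩) hle'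
  · -- γ_snR ≤ 2 γ_s
    have : G.gammaSnR / 2 ≤ sInf S := by
      apply le_csInf hSne
      rintro w ⟨D, hDdom, rfl⟩
      set f : V → ℕ := fun v => if v ∈ D then 2 else 0 with hf
      have hSN : G.IsSNRDF f := by
        constructor
        · intro v; by_cases h : v ∈ D <;> simp [hf, h]
        · intro v hv
          have hvD : v ∉ D := by
            by_contra h
            simp [hf, h] at hv
          obtain ⟨u, hu, hsu⟩ := hDdom v hvD
          exact ⟨u, hsu, by simp [hf, hu]⟩
      have hw : G.snrdfWeight f = 2 * G.domWeight D := by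
        unfold FuzzyGraph.snrdfWeight FuzzyGraph.domWeight
        rw [Finset.mul_sum, ← Finset.sum_filter_add_sum_filter_not Finset.univ
          (fun v => v ∈ D) (fun v => (f v : ℝ) * G.mus v)]
        have h1 : ∑ v ∈ Finset.univ.filter (fun v => v ∈ D), (f v : ℝ) * G.mus v
            = ∑ u ∈ D, 2 * G.mus u := by
          rw [Finset.filter_mem_eq_inter, Finset.univ_inter]
          apply Finset.sum_congr rfl
          intro v hv; simp [hf, hv]
        have h2 : ∑ v ∈ Finset.univ.filter (fun v => ¬ v ∈ D), (f v : ℝ) * G.mus v = 0 := by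
          apply Finset.sum_eq_zero
          intro v hv
          have := (Finset.mem_filter.mp hv).2
          simp [hf, this]
        rw [h1, h2, add_zero]
      have : G.gammaSnR ≤ 2 * G.domWeight D := by
        rw [← hw]
        exact csInf_le hTbdd ⟨f, hSN, rfl⟩
      linarith
    have h2 : sInf S = G.gammaS := rfl
    rw [h2] at this
    linarith
end
end

section
/- Among all minimum-weight strong-neighbors Roman dominating functions, one for which the set V_1 = {u : f(u) = 1} has minimum cardinality satisfies that no two vertices of V_1 are strong neighbors. -/
noncomputable section
open scoped Classical
open Finset

/-! If `u, v ∈ V₁` were strong neighbours with `μ_s(v) ≤ μ_s(u)`, resetting `f u := 0` and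
`f v := 2` would give an SNRDF (`u` is now dominated by `v`, and no vertex loses its neighbour
labelled 2) of weight `w(f) - μ_s(u) + μ_s(v) ≤ w(f)`, hence again of minimum weight, but with two
fewer vertices labelled 1. Strong edges are symmetric, because reversing a walk preserves its
strength, so the roles of `u` and `v` may be exchanged. -/

theorem List.zip_tail_append_pair {α : Type*} (l : List α) (a b : α) :
    (l ++ [a, b]).zip (l ++ [a, b]).tail = (l ++ [a]).zip (l ++ [a]).tail ++ [(a, b)] := by
  induction l with
  | nil => simp
  | cons x t ih => cases t <;> simp_all

theorem List.zip_tail_reverse {α : Type*} (l : List α) :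
    l.reverse.zip l.reverse.tail = ((l.zip l.tail).map Prod.swap).reverse := by
  induction l with
  | nil => simp
  | cons x t ih =>
    cases t with
    | nil => simp
    | cons y s => simp_all [List.zip_tail_append_pair]

theorem Finset.filter_update_ne_eq_erase {α β : Type*} [DecidableEq α] [DecidableEq β]
    (s : Finset α) (f : α → β) (a : α) {b c : β} (hbc : b ≠ c) :
    s.filter (fun x => Function.update f a b x = c) = (s.filter fun x => f x = c).erase a := by
  ext x
  by_cases hx : x = a <;> simp [hx, hbc]

namespace FuzzyGraph

variable {V : Type*} (G : FuzzyGraph V)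

theorem walkStrength_reverse (l : List V) : G.walkStrength l.reverse = G.walkStrength l := by
  unfold walkStrength
  rw [List.zip_tail_reverse, List.map_reverse, (List.reverse_perm _).foldr_eq, List.map_map]
  congr 1
  exact List.map_congr_left fun p _ => G.μ_symm p.2 p.1

variable {G}

theorem IsWalk.reverse {u v : V} {l : List V} (h : G.IsWalk u v l) : G.IsWalk v u l.reverse := by
  obtain ⟨hhead, hlast, hchain⟩ := h
  refine ⟨by rwa [List.head?_reverse], by rwa [List.getLast?_reverse], ?_⟩
  rw [List.Chain', List.isChain_reverse]
  exact hchain.imp fun a b hab => by rwa [G.μ_symm b a]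

variable (G) in
theorem conn_comm (u v : V) : G.conn u v = G.conn v u := by
  unfold conn
  congr 1
  ext s
  constructor <;>
  · rintro ⟨l, hwalk, hlen, rfl⟩
    exact ⟨l.reverse, hwalk.reverse, by rwa [List.length_reverse],
      (G.walkStrength_reverse l).symm⟩

theorem StrongEdge.symm {u v : V} (h : G.StrongEdge u v) : G.StrongEdge v u := by
  rw [StrongEdge, G.μ_symm, G.conn_comm]
  exact h

theorem StrongEdge.ne {u v : V} (h : G.StrongEdge u v) : u ≠ v := by
  rintro rfl
  exact (G.μ_irrefl u ▸ h.1).false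

theorem mus_nonneg (u : V) : 0 ≤ G.mus u :=
  Real.sInf_nonneg (by rintro x ⟨v, -, rfl⟩; exact G.μ_nonneg u v)

theorem IsSNRDF.update_zero_update_two {f : V → ℕ} (hf : G.IsSNRDF f) {u v : V}
    (huv : G.StrongEdge u v) (hu : f u ≠ 2) : G.IsSNRDF (Function.update (Function.update f u 0) v 2) := by
  refine ⟨fun w => ?_, fun w hw => ?_⟩
  · simp only [Function.update_apply]
    split_ifs <;> simp [hf.1 w]
  · by_cases hwv : w = v
    · simp [hwv] at hw
    by_cases hwu : w = u
    · exact ⟨v, hwu ▸ huv, Function.update_self ..⟩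
    obtain ⟨z, hwz, hz⟩ := hf.2 w (by simpa [hwv, hwu] using hw)
    have hzu : z ≠ u := by rintro rfl; exact hu hz
    exact ⟨z, hwz, by simp [Function.update_apply, hzu, hz]⟩

section Fintype

variable [Fintype V]

theorem gammaSnR_le_snrdfWeight {g : V → ℕ} (hg : G.IsSNRDF g) : G.gammaSnR ≤ G.snrdfWeight g :=
  csInf_le ⟨0, by
    rintro w ⟨h, -, rfl⟩
    exact sum_nonneg fun v _ => mul_nonneg (Nat.cast_nonneg _) (G.mus_nonneg v)⟩ ⟨g, hg, rfl⟩

theorem snrdfWeight_update (f : V → ℕ) (w : V) (n : ℕ) :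
    G.snrdfWeight (Function.update f w n) = G.snrdfWeight f + ((n : ℝ) - f w) * G.mus w := by
  unfold snrdfWeight
  rw [← add_sum_erase _ _ (mem_univ w), ← add_sum_erase _ _ (mem_univ w),
    sum_congr rfl fun v hv => by rw [Function.update_of_ne (ne_of_mem_erase hv)],
    Function.update_self]
  ring

theorem not_strongEdge_of_mus_le {f : V → ℕ} (hf : G.IsSNRDF f)
    (hmin : G.snrdfWeight f = G.gammaSnR)
    (hcard : ∀ g : V → ℕ, G.IsSNRDF g → G.snrdfWeight g = G.gammaSnR →
      #{w | f w = 1} ≤ #{w | g w = 1})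
    {u v : V} (hu : f u = 1) (hv : f v = 1) (hmus : G.mus v ≤ G.mus u) : ¬ G.StrongEdge u v := by
  intro huv
  set g := Function.update (Function.update f u 0) v 2
  have hg : G.IsSNRDF g := hf.update_zero_update_two huv (by omega)
  have hweight : G.snrdfWeight g = G.snrdfWeight f - G.mus u + G.mus v := by
    rw [snrdfWeight_update, snrdfWeight_update, Function.update_of_ne huv.ne.symm, hu, hv]
    push_cast
    ring
  have hg_min : G.snrdfWeight g = G.gammaSnR :=
    le_antisymm (by linarith) (gammaSnR_le_snrdfWeight hg)
  have hV₁ : #{w | g w = 1} + 2 = #{w | f w = 1} := by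
    rw [filter_update_ne_eq_erase _ _ _ (by decide), filter_update_ne_eq_erase _ _ _ (by decide)]
    have hcard_u := card_erase_add_one (s := {w | f w = 1}) (a := u) (by simp [hu])
    have hcard_v := card_erase_add_one (s := ({w | f w = 1} : Finset V).erase u) (a := v)
      (by simp [huv.ne.symm, hv])
    omega
  have := hcard g hg hg_min
  omega

end Fintype

end FuzzyGraph

/-- a minimum-weight SNRDF whose set `V₁ = {u : f u = 1}` has
minimum cardinality has no two strong neighbors in `V₁`. -/
theorem no_strong_neighbors_in_V1 {V : Type*} [Fintype V]
    (G : FuzzyGraph V) (f : V → ℕ) (hf : G.IsSNRDF f)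
    (hmin : G.snrdfWeight f = G.gammaSnR)
    (hcard : ∀ g : V → ℕ, G.IsSNRDF g → G.snrdfWeight g = G.gammaSnR →
      (Finset.univ.filter fun v => f v = 1).card ≤
        (Finset.univ.filter fun v => g v = 1).card) :
    ∀ u v : V, f u = 1 → f v = 1 → ¬ G.StrongEdge u v := by
  intro u v hu hv huv
  rcases le_total (G.mus v) (G.mus u) with hmus | hmus
  · exact G.not_strongEdge_of_mus_le hf hmin hcard hu hv hmus huv
  · exact G.not_strongEdge_of_mus_le hf hmin hcard hv hu hmus huv.symm
end
end

section
/- Let K_{σ1,σ2} be a complete bipartite fuzzy graph with parts X = {x_1,...,x_{s1}} and Y = {y_1,...,y_{s2}}, s1 ≤ s2, with μ_s(x_i) nondecreasing in i and μ_s(y_j) nondecreasing in j. If s1 ≥ 3 then γ_snR(K_{σ1,σ2}) = 4·μ_s(x_1). -/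
noncomputable section
open scoped Classical
open Finset

namespace FuzzyGraph

variable {V : Type*}

lemma mus_nonneg' (G : FuzzyGraph V) (v : V) : 0 ≤ G.mus v := by
  apply Real.sInf_nonneg
  rintro x ⟨w, _, rfl⟩
  exact G.μ_nonneg v w

lemma walkStrength_cons_cons' (G : FuzzyGraph V) (a b : V) (t : List V) :
    G.walkStrength (a :: b :: t) = min (G.μ a b) (G.walkStrength (b :: t)) := rfl

lemma walkStrength_le_head' (G : FuzzyGraph V) (a b : V) (t : List V) :
    G.walkStrength (a :: b :: t) ≤ G.σ a := by
  rw [walkStrength_cons_cons']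
  exact le_trans (min_le_left _ _) (le_trans (G.μ_le a b) (min_le_left _ _))

lemma walkStrength_le_last' (G : FuzzyGraph V) :
    ∀ (t : List V) (a b v : V), (b :: t).getLast? = some v →
      G.walkStrength (a :: b :: t) ≤ G.σ v
  | [], a, b, v, h => by
    simp only [List.getLast?_singleton, Option.some.injEq] at h
    subst h
    rw [walkStrength_cons_cons']
    exact le_trans (min_le_left _ _) (le_trans (G.μ_le a b) (min_le_right _ _))
  | c :: t, a, b, v, h => by
    rw [walkStrength_cons_cons']
    have h' : (c :: t).getLast? = some v := by rwa [List.getLast?_cons_cons] at h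
    exact le_trans (min_le_right _ _) (walkStrength_le_last' G t b c v h')

lemma strong_cross' (G : FuzzyGraph V) (side : V → Bool)
    (hbip : ∀ u v : V, side u ≠ side v → G.μ u v = min (G.σ u) (G.σ v))
    (hσ : ∀ v, 0 < G.σ v) (u v : V) (h : side u ≠ side v) :
    G.StrongEdge u v := by
  have hμ := hbip u v h
  have hpos : 0 < G.μ u v := by rw [hμ]; exact lt_min (hσ u) (hσ v)
  have hμ1 : G.μ u v ≤ 1 :=
    le_trans (G.μ_le u v) (le_trans (min_le_left _ _) (G.σ_le_one u))
  have hub : ∀ s ∈ {s | ∃ l : List V, G.IsWalk u v l ∧ 2 ≤ l.length ∧ s = G.walkStrength l},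
      s ≤ G.μ u v := by
    rintro s ⟨l, ⟨hh, hl, _⟩, hlen, rfl⟩
    obtain _ | ⟨a, _ | ⟨b, t⟩⟩ := l
    · simp at hlen
    · simp at hlen
    · have ha : a = u := by simpa using hh
      subst ha
      have h1 : G.walkStrength (a :: b :: t) ≤ G.σ a := walkStrength_le_head' G a b t
      have h2 : (b :: t).getLast? = some v := by rwa [List.getLast?_cons_cons] at hl
      have h3 := walkStrength_le_last' G t a b v h2
      rw [hμ]
      exact le_min h1 h3
  have hmem : G.μ u v ∈
      {s | ∃ l : List V, G.IsWalk u v l ∧ 2 ≤ l.length ∧ s = G.walkStrength l} := by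
    refine ⟨[u, v], ⟨rfl, by simp, List.isChain_pair.mpr hpos⟩, by simp, ?_⟩
    show G.μ u v = min (G.μ u v) 1
    exact (min_eq_left hμ1).symm
  exact ⟨hpos, le_antisymm (le_csSup ⟨G.μ u v, hub⟩ hmem) (csSup_le ⟨_, hmem⟩ hub)⟩

lemma strong_side' (G : FuzzyGraph V) (side : V → Bool)
    (hin : ∀ u v : V, side u = side v → G.μ u v = 0)
    (u v : V) (h : G.StrongEdge u v) : side u ≠ side v := by
  intro he
  have := h.1
  rw [hin u v he] at this
  exact lt_irrefl 0 this

lemma mus_le_of' (G : FuzzyGraph V) (u v : V)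
    (hne : Set.Nonempty {x | ∃ w, G.StrongEdge v w ∧ x = G.μ v w})
    (h : ∀ w, G.StrongEdge v w → ∃ w', G.StrongEdge u w' ∧ G.μ u w' ≤ G.μ v w) :
    G.mus u ≤ G.mus v := by
  simp only [FuzzyGraph.mus]
  apply le_csInf hne
  rintro b ⟨w, hw, rfl⟩
  obtain ⟨w', hw', hle⟩ := h w hw
  have hbdd : BddBelow {x | ∃ z, G.StrongEdge u z ∧ x = G.μ u z} :=
    ⟨0, by rintro x ⟨z, _, rfl⟩; exact G.μ_nonneg u z⟩
  exact le_trans (csInf_le hbdd ⟨w', hw', rfl⟩) hle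

end FuzzyGraph

/-- for a complete bipartite fuzzy graph with both parts of
size between 3 and |Y|, `γ_snR = 4·μ_s(x₁)` where `x₁` minimizes `μ_s` on `X`. -/
theorem gammaSnR_complete_bipartite_big {V : Type*} [Fintype V]
    (G : FuzzyGraph V) (side : V → Bool)
    (hbip : ∀ u v : V, side u ≠ side v → G.μ u v = min (G.σ u) (G.σ v))
    (hin : ∀ u v : V, side u = side v → G.μ u v = 0)
    (hσ : ∀ v, 0 < G.σ v)
    (x1 : V) (hx1 : side x1 = true)
    (hx1min : ∀ v : V, side v = true → G.mus x1 ≤ G.mus v)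
    (hcardX : 3 ≤ (Finset.univ.filter fun v : V => side v = true).card)
    (hXY : (Finset.univ.filter fun v : V => side v = true).card ≤
        (Finset.univ.filter fun v : V => side v = false).card) :
    G.gammaSnR = 4 * G.mus x1 := by
  classical
  set X := Finset.univ.filter (fun v : V => side v = true) with hX
  set Y := Finset.univ.filter (fun v : V => side v = false) with hY
  have hYcard : 3 ≤ Y.card := le_trans hcardX hXY
  have hXne : X.Nonempty := Finset.card_pos.mp (by omega)
  have hYne : Y.Nonempty := Finset.card_pos.mp (by omega)
  obtain ⟨xs, hxsX, hxsmin⟩ := Finset.exists_min_image X G.σ hXne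
  obtain ⟨ys, hysY, hysmin⟩ := Finset.exists_min_image Y G.σ hYne
  have hxs : side xs = true := (Finset.mem_filter.mp hxsX).2
  have hys : side ys = false := (Finset.mem_filter.mp hysY).2
  have hstrong : ∀ u v : V, side u ≠ side v → G.StrongEdge u v :=
    FuzzyGraph.strong_cross' G side hbip hσ
  have hTne : ∀ v : V, Set.Nonempty {x | ∃ w, G.StrongEdge v w ∧ x = G.μ v w} := by
    intro v
    cases hb : side v with
    | true => exact ⟨G.μ v ys, ys, hstrong v ys (by simp [hb, hys]), rfl⟩
    | false => exact ⟨G.μ v xs, xs, hstrong v xs (by simp [hb, hxs]), rfl⟩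
  have hcomp : ∀ z v : V, side z ≠ side v → (∀ x : V, side x = side z → G.σ z ≤ G.σ x) →
      G.mus z ≤ G.mus v := by
    intro z v hzv hzmin
    apply FuzzyGraph.mus_le_of' G z v (hTne v)
    intro w hw
    refine ⟨v, hstrong z v hzv, ?_⟩
    have hvw : side v ≠ side w := FuzzyGraph.strong_side' G side hin v w hw
    have hwz : side w = side z := by
      cases h1 : side v <;> cases h2 : side w <;> cases h3 : side z <;> simp_all
    rw [hbip z v hzv, hbip v w hvw]
    exact le_min (le_trans (min_le_right _ _) le_rfl)
      (le_trans (min_le_left _ _) (hzmin w hwz))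
  have hxsmin' : ∀ x : V, side x = side xs → G.σ xs ≤ G.σ x := by
    intro x hx
    exact hxsmin x (Finset.mem_filter.mpr ⟨Finset.mem_univ x, by rw [hx, hxs]⟩)
  have hysmin' : ∀ x : V, side x = side ys → G.σ ys ≤ G.σ x := by
    intro x hx
    exact hysmin x (Finset.mem_filter.mpr ⟨Finset.mem_univ x, by rw [hx, hys]⟩)
  have hx1le : ∀ v : V, G.mus x1 ≤ G.mus v := by
    intro v
    cases hb : side v with
    | true => exact hx1min v hb
    | false =>
      exact le_trans (hx1min xs hxs) (hcomp xs v (by simp [hxs, hb]) hxsmin')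
  have hyseq : G.mus ys = G.mus x1 :=
    le_antisymm (hcomp ys x1 (by simp [hys, hx1]) hysmin') (hx1le ys)
  have hx1ys : x1 ≠ ys := by
    intro h
    rw [h, hys] at hx1
    exact Bool.noConfusion hx1
  set f0 : V → ℕ := fun v => if v = x1 ∨ v = ys then 2 else 0 with hf0
  have hf0x1 : f0 x1 = 2 := if_pos (Or.inl rfl)
  have hf0ys : f0 ys = 2 := if_pos (Or.inr rfl)
  have hf0S : G.IsSNRDF f0 := by
    constructor
    · intro v
      simp only [hf0]
      split <;> omega
    · intro v hv
      have hvx1 : v ≠ x1 ∧ v ≠ ys := by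
        by_contra hc
        rcases not_and_or.mp hc with hc | hc
        · push_neg at hc
          rw [hc, hf0x1] at hv; exact absurd hv (by omega)
        · push_neg at hc
          rw [hc, hf0ys] at hv; exact absurd hv (by omega)
      cases hb : side v with
      | true => exact ⟨ys, hstrong v ys (by simp [hb, hys]), hf0ys⟩
      | false => exact ⟨x1, hstrong v x1 (by simp [hb, hx1]), hf0x1⟩
  have hweight : G.snrdfWeight f0 = 4 * G.mus x1 := by
    unfold FuzzyGraph.snrdfWeight
    have hz : ∀ v ∈ (Finset.univ : Finset V), v ∉ ({x1, ys} : Finset V) →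
        (f0 v : ℝ) * G.mus v = 0 := by
      intro v _ hv
      simp only [Finset.mem_insert, Finset.mem_singleton] at hv
      push_neg at hv
      have : f0 v = 0 := if_neg (by tauto)
      rw [this]; simp
    rw [← Finset.sum_subset (Finset.subset_univ ({x1, ys} : Finset V)) hz]
    rw [Finset.sum_pair hx1ys, hf0x1, hf0ys, hyseq]
    push_cast
    ring
  have hsum4 : ∀ f : V → ℕ, G.IsSNRDF f → 4 ≤ ∑ v, f v := by
    intro f hf
    by_cases h0 : ∃ v, f v = 0
    · obtain ⟨v0, hv0⟩ := h0
      obtain ⟨u, hu, hu2⟩ := hf.2 v0 hv0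
      by_cases h1 : ∃ z, side z = side u ∧ f z = 0
      · obtain ⟨z, hz, hz0⟩ := h1
        obtain ⟨u', hu', hu'2⟩ := hf.2 z hz0
        have hne : u ≠ u' := by
          intro he
          have h2 := FuzzyGraph.strong_side' G side hin z u' hu'
          rw [← he, hz] at h2
          exact h2 rfl
        calc (4 : ℕ) = f u + f u' := by omega
          _ = ∑ v ∈ ({u, u'} : Finset V), f v := (Finset.sum_pair hne).symm
          _ ≤ ∑ v, f v := Finset.sum_le_sum_of_subset (Finset.subset_univ _)
      · push_neg at h1
        set s := Finset.univ.filter (fun z => side z = side u) with hs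
        have hsc : 3 ≤ s.card := by
          cases hbu : side u with
          | true =>
            have : s = X := by rw [hs, hX]; simp [hbu]
            rw [this]; exact hcardX
          | false =>
            have : s = Y := by rw [hs, hY]; simp [hbu]
            rw [this]; exact hYcard
        have hus : u ∈ s := by rw [hs]; simp
        have h2c : 2 ≤ (s.erase u).card := by
          have := Finset.card_erase_of_mem hus
          omega
        have hcardsum : (s.erase u).card ≤ ∑ z ∈ s.erase u, f z := by
          calc (s.erase u).card = ∑ _z ∈ s.erase u, 1 := by simp
            _ ≤ ∑ z ∈ s.erase u, f z := by
              apply Finset.sum_le_sum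
              intro z hzz
              have hside := (Finset.mem_filter.mp (Finset.mem_of_mem_erase hzz)).2
              have := h1 z hside
              omega
        calc (4 : ℕ) ≤ f u + ∑ z ∈ s.erase u, f z := by omega
          _ = ∑ z ∈ s, f z := Finset.add_sum_erase s f hus
          _ ≤ ∑ v, f v := Finset.sum_le_sum_of_subset (Finset.subset_univ _)
    · push_neg at h0
      have hdisj : Disjoint X Y := by
        rw [Finset.disjoint_left]
        intro a ha hb
        have h1 := (Finset.mem_filter.mp ha).2
        have h2 := (Finset.mem_filter.mp hb).2
        rw [h1] at h2
        exact Bool.noConfusion h2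
      have hle : X.card + Y.card ≤ Fintype.card V := by
        rw [← Finset.card_union_of_disjoint hdisj, ← Finset.card_univ]
        exact Finset.card_le_card (Finset.subset_univ _)
      have hcardle : Fintype.card V ≤ ∑ v, f v := by
        rw [← Finset.card_univ]
        calc (Finset.univ : Finset V).card = ∑ _v : V, 1 := by simp
          _ ≤ ∑ v, f v := Finset.sum_le_sum (fun v _ => by have := h0 v; omega)
      omega
  have hlow : ∀ w ∈ {w | ∃ f : V → ℕ, G.IsSNRDF f ∧ w = G.snrdfWeight f},
      4 * G.mus x1 ≤ w := by
    rintro w ⟨f, hf, rfl⟩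
    have hm0 : 0 ≤ G.mus x1 := FuzzyGraph.mus_nonneg' G x1
    have step1 : (∑ v, (f v : ℝ)) * G.mus x1 ≤ G.snrdfWeight f := by
      unfold FuzzyGraph.snrdfWeight
      rw [Finset.sum_mul]
      exact Finset.sum_le_sum fun v _ =>
        mul_le_mul_of_nonneg_left (hx1le v) (by positivity)
    have hcast : (4 : ℝ) ≤ ∑ v, (f v : ℝ) := by
      have h4 := hsum4 f hf
      calc (4 : ℝ) ≤ ((∑ v, f v : ℕ) : ℝ) := by exact_mod_cast h4
        _ = ∑ v, (f v : ℝ) := by push_cast; rfl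
    have step2 : (4 : ℝ) * G.mus x1 ≤ (∑ v, (f v : ℝ)) * G.mus x1 :=
      mul_le_mul_of_nonneg_right hcast hm0
    linarith
  have hmem : 4 * G.mus x1 ∈ {w | ∃ f : V → ℕ, G.IsSNRDF f ∧ w = G.snrdfWeight f} :=
    ⟨f0, hf0S, hweight.symm⟩
  unfold FuzzyGraph.gammaSnR
  exact le_antisymm (csInf_le ⟨4 * G.mus x1, hlow⟩ hmem) (le_csInf ⟨_, hmem⟩ hlow)
end
end
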